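/- Let u, B, ρ, S, T, h be smooth fields on ℝ × ℝ³ with ρ > 0 everywhere, let μ₀ > 0 be a constant, and set ω = ∇×u. Assume Faraday's equation ∂B/∂t − ∇×(u×B) = 0, Gauss's law ∇·B = 0, and the MHD momentum equation in the form ∂u/∂t − u×ω + ∇(h + |u|²/2) − ((∇×B)×B)/(μ₀ρ) = T∇S. Then the cross helicity density u·B satisfies ∂(u·B)/∂t + ∇·[ (u·B) u + (h − |u|²/2) B ] = T B·∇S. -/

import Mathlib

noncomputable section

/-- Vectors in ℝ³. -/
abbrev Vec3 : Type := Fin 3 → ℝ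

/-- Points of space-time: `(t, x)` with `t : ℝ`, `x : Fin 3 → ℝ`. -/
abbrev Pt : Type := ℝ × Vec3

/-- Euclidean dot product on ℝ³. -/
def dot3 (a b : Vec3) : ℝ := ∑ i, a i * b i

/-- Cross product on ℝ³. -/
def cross3 (a b : Vec3) : Vec3 :=
  ![a 1 * b 2 - a 2 * b 1, a 2 * b 0 - a 0 * b 2, a 0 * b 1 - a 1 * b 0]

/-- Spatial partial derivative ∂f/∂xᵢ of a scalar field. -/
def pd (i : Fin 3) (f : Pt → ℝ) (p : Pt) : ℝ :=
  fderiv ℝ (fun x => f (p.1, x)) p.2 (Pi.single i 1)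

/-- Time derivative ∂f/∂t of a scalar field. -/
def dt (f : Pt → ℝ) (p : Pt) : ℝ := deriv (fun s => f (s, p.2)) p.1

/-- Time derivative of a vector field, componentwise. -/
def dtVec (F : Pt → Vec3) (p : Pt) : Vec3 := fun i => dt (fun q => F q i) p

/-- Spatial gradient ∇f of a scalar field. -/
def grad3 (f : Pt → ℝ) (p : Pt) : Vec3 := fun i => pd i f p

/-- Spatial divergence ∇·F of a vector field. -/
def div3 (F : Pt → Vec3) (p : Pt) : ℝ := ∑ i, pd i (fun q => F q i) p

/-- Spatial curl ∇×F of a vector field. -/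
def curl3 (F : Pt → Vec3) (p : Pt) : Vec3 :=
  ![pd 1 (fun q => F q 2) p - pd 2 (fun q => F q 1) p,
    pd 2 (fun q => F q 0) p - pd 0 (fun q => F q 2) p,
    pd 0 (fun q => F q 1) p - pd 1 (fun q => F q 0) p]

/-- Directional derivative (u·∇)f of a scalar field. -/
def dirD (u : Pt → Vec3) (f : Pt → ℝ) (p : Pt) : ℝ := ∑ i, u p i * pd i f p

/-- Directional derivative (u·∇)F of a vector field. -/
def dirDVec (u F : Pt → Vec3) (p : Pt) : Vec3 :=
  fun j => ∑ i, u p i * pd i (fun q => F q j) p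

/-- (∇u)ᵀ·A, the vector with i-th component ∑ⱼ (∂uʲ/∂xⁱ) Aⱼ. -/
def gradTdot (u A : Pt → Vec3) (p : Pt) : Vec3 :=
  fun i => ∑ j, pd i (fun q => u q j) p * A p j

/-- A field is smooth when it is C^∞ jointly in time and space. -/
def SmoothS (f : Pt → ℝ) : Prop := ContDiff ℝ (⊤ : ℕ∞) f

/-- A vector field is smooth when it is C^∞ jointly in time and space. -/
def SmoothV (F : Pt → Vec3) : Prop := ContDiff ℝ (⊤ : ℕ∞) F

/-!
Dot the momentum equation with `B` and Faraday's law with `u`. The Lorentz force drops out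
because `B · (J × B) = 0`, the enthalpy gradient is absorbed by the flux `(h - |u|²/2) B`, and
what remains is the kinematic identity
`B · (u × ω) + u · ∇ × (u × B) = B · ∇|u|² - ∇ · ((u · B) u) + |u|² ∇ · B`,
whose last term vanishes by Gauss's law. It follows from `u × (∇ × u) = (∇u)ᵀu - (u · ∇)u`,
`∇ × (u × B) = (∇ · B) u - (∇ · u) B + (B · ∇) u - (u · ∇) B` and the index swap
`A · ((∇u)ᵀ B) = B · ((A · ∇) u)`.
-/

lemma dot3_eq_dotProduct : dot3 = dotProduct := rfl

lemma dot3_comm (a b : Vec3) : dot3 a b = dot3 b a := dotProduct_comm a b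

lemma dot3_cross3_self_right (a b : Vec3) : dot3 b (cross3 a b) = 0 := by
  simp only [dot3, cross3, Fin.sum_univ_three, Matrix.cons_val, Matrix.cons_val_zero,
    Matrix.cons_val_one, Fin.isValue]
  ring

lemma dot3_gradTdot (A u B : Pt → Vec3) (p : Pt) :
    dot3 (A p) (gradTdot u B p) = dot3 (B p) (dirDVec A u p) := by
  simp only [dot3, gradTdot, dirDVec, Finset.mul_sum]
  rw [Finset.sum_comm]
  exact Finset.sum_congr rfl fun _ _ => Finset.sum_congr rfl fun _ _ => by ring

lemma cross3_curl3 (A F : Pt → Vec3) (p : Pt) :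
    cross3 (A p) (curl3 F p) = gradTdot F A p - dirDVec A F p := by
  funext k
  fin_cases k <;>
    simp only [cross3, curl3, gradTdot, dirDVec, Fin.sum_univ_three, Pi.sub_apply, Matrix.cons_val,
      Matrix.cons_val_zero, Matrix.cons_val_one, Fin.isValue, Fin.zero_eta, Fin.mk_one,
      Fin.reduceFinMk] <;>
    ring

section Calculus

variable {f g : Pt → ℝ} {u A B F : Pt → Vec3} {p : Pt}

lemma DifferentiableAt.spatial_slice (hf : DifferentiableAt ℝ f p) :
    DifferentiableAt ℝ (fun x => f (p.1, x)) p.2 :=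
  hf.comp p.2 ((differentiableAt_const p.1).prodMk differentiableAt_id)

lemma DifferentiableAt.time_slice (hf : DifferentiableAt ℝ f p) :
    DifferentiableAt ℝ (fun s => f (s, p.2)) p.1 :=
  hf.comp p.1 (differentiableAt_id.prodMk (differentiableAt_const p.2))

lemma pd_add (hf : DifferentiableAt ℝ f p) (hg : DifferentiableAt ℝ g p) (i : Fin 3) :
    pd i (fun q => f q + g q) p = pd i f p + pd i g p := by
  simp [pd, fderiv_fun_add hf.spatial_slice hg.spatial_slice]

lemma pd_sub (hf : DifferentiableAt ℝ f p) (hg : DifferentiableAt ℝ g p) (i : Fin 3) :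
    pd i (fun q => f q - g q) p = pd i f p - pd i g p := by
  simp [pd, fderiv_fun_sub hf.spatial_slice hg.spatial_slice]

lemma pd_mul (hf : DifferentiableAt ℝ f p) (hg : DifferentiableAt ℝ g p) (i : Fin 3) :
    pd i (fun q => f q * g q) p = pd i f p * g p + f p * pd i g p := by
  simp only [pd, fderiv_fun_mul hf.spatial_slice hg.spatial_slice, Prod.mk.eta,
    add_apply, smul_apply, smul_eq_mul]
  ring

lemma pd_div_const (hf : DifferentiableAt ℝ f p) (c : ℝ) (i : Fin 3) :
    pd i (fun q => f q / c) p = pd i f p / c := by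
  simp only [pd, div_eq_mul_inv]
  rw [fderiv_mul_const hf.spatial_slice]
  simp [mul_comm]

lemma pd_sum {ι : Type*} (s : Finset ι) {f : ι → Pt → ℝ}
    (hf : ∀ j ∈ s, DifferentiableAt ℝ (f j) p) (i : Fin 3) :
    pd i (fun q => ∑ j ∈ s, f j q) p = ∑ j ∈ s, pd i (f j) p := by
  simp [pd, fderiv_fun_sum fun j hj => (hf j hj).spatial_slice]

lemma dt_sum {ι : Type*} (s : Finset ι) {f : ι → Pt → ℝ}
    (hf : ∀ j ∈ s, DifferentiableAt ℝ (f j) p) :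
    dt (fun q => ∑ j ∈ s, f j q) p = ∑ j ∈ s, dt (f j) p :=
  deriv_fun_sum fun j hj => (hf j hj).time_slice

lemma dt_mul (hf : DifferentiableAt ℝ f p) (hg : DifferentiableAt ℝ g p) :
    dt (fun q => f q * g q) p = dt f p * g p + f p * dt g p :=
  deriv_mul hf.time_slice hg.time_slice

lemma DifferentiableAt.dot3 (hu : DifferentiableAt ℝ u p) (hB : DifferentiableAt ℝ B p) :
    DifferentiableAt ℝ (fun q => dot3 (u q) (B q)) p := by
  have hu' := differentiableAt_pi.mp hu
  have hB' := differentiableAt_pi.mp hB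
  simp only [_root_.dot3]
  fun_prop

lemma dt_dot3 (hu : DifferentiableAt ℝ u p) (hB : DifferentiableAt ℝ B p) :
    dt (fun q => dot3 (u q) (B q)) p = dot3 (dtVec u p) (B p) + dot3 (u p) (dtVec B p) := by
  have hu' := differentiableAt_pi.mp hu
  have hB' := differentiableAt_pi.mp hB
  simp only [dot3]
  rw [dt_sum (f := fun j q => u q j * B q j) _ fun j _ => (hu' j).mul (hB' j),
    ← Finset.sum_add_distrib]
  exact Finset.sum_congr rfl fun j _ => dt_mul (hu' j) (hB' j)

lemma grad3_dot3 (hu : DifferentiableAt ℝ u p) (hB : DifferentiableAt ℝ B p) :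
    grad3 (fun q => dot3 (u q) (B q)) p = gradTdot u B p + gradTdot B u p := by
  have hu' := differentiableAt_pi.mp hu
  have hB' := differentiableAt_pi.mp hB
  funext i
  simp only [grad3, dot3, gradTdot, Pi.add_apply]
  rw [pd_sum (f := fun j q => u q j * B q j) _ fun j _ => (hu' j).mul (hB' j),
    ← Finset.sum_add_distrib]
  exact Finset.sum_congr rfl fun j _ => by rw [pd_mul (hu' j) (hB' j)]; ring

lemma grad3_add (hf : DifferentiableAt ℝ f p) (hg : DifferentiableAt ℝ g p) :
    grad3 (fun q => f q + g q) p = grad3 f p + grad3 g p :=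
  funext (pd_add hf hg)

lemma grad3_sub (hf : DifferentiableAt ℝ f p) (hg : DifferentiableAt ℝ g p) :
    grad3 (fun q => f q - g q) p = grad3 f p - grad3 g p :=
  funext (pd_sub hf hg)

lemma grad3_div_const (hf : DifferentiableAt ℝ f p) (c : ℝ) :
    grad3 (fun q => f q / c) p = c⁻¹ • grad3 f p := by
  funext i
  simp only [grad3, pd_div_const hf, Pi.smul_apply, smul_eq_mul]
  ring

lemma div3_add (hA : DifferentiableAt ℝ A p) (hF : DifferentiableAt ℝ F p) :
    div3 (fun q => A q + F q) p = div3 A p + div3 F p := by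
  simp only [div3, Pi.add_apply, ← Finset.sum_add_distrib]
  exact Finset.sum_congr rfl fun i _ =>
    pd_add (differentiableAt_pi.mp hA i) (differentiableAt_pi.mp hF i) i

lemma div3_smul (hf : DifferentiableAt ℝ f p) (hF : DifferentiableAt ℝ F p) :
    div3 (fun q => f q • F q) p = dot3 (F p) (grad3 f p) + f p * div3 F p := by
  simp only [div3, dot3, grad3, Pi.smul_apply, smul_eq_mul, Finset.mul_sum,
    ← Finset.sum_add_distrib]
  exact Finset.sum_congr rfl fun i _ => by rw [pd_mul hf (differentiableAt_pi.mp hF i) i]; ring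

lemma curl3_cross3 (hu : DifferentiableAt ℝ u p) (hB : DifferentiableAt ℝ B p) :
    curl3 (fun q => cross3 (u q) (B q)) p =
      div3 B p • u p - div3 u p • B p + dirDVec B u p - dirDVec u B p := by
  have hu' := differentiableAt_pi.mp hu
  have hB' := differentiableAt_pi.mp hB
  have huB : ∀ i j, DifferentiableAt ℝ (fun q => u q i * B q j) p :=
    fun i j => (hu' i).mul (hB' j)
  funext k
  fin_cases k <;>
    simp only [curl3, cross3, div3, dirDVec, Fin.sum_univ_three, pd_sub, pd_mul, hu', hB', huB,
      Pi.add_apply, Pi.sub_apply, Pi.smul_apply, smul_eq_mul, Matrix.cons_val,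
      Matrix.cons_val_zero, Matrix.cons_val_one, Fin.isValue, Fin.zero_eta, Fin.mk_one,
      Fin.reduceFinMk] <;>
    ring

lemma dot3_cross3_curl3_add_dot3_curl3_cross3 (hu : DifferentiableAt ℝ u p)
    (hB : DifferentiableAt ℝ B p) :
    dot3 (B p) (cross3 (u p) (curl3 u p)) + dot3 (u p) (curl3 (fun q => cross3 (u q) (B q)) p) =
      dot3 (B p) (grad3 (fun q => dot3 (u q) (u q)) p)
        - div3 (fun q => dot3 (u q) (B q) • u q) p + dot3 (u p) (u p) * div3 B p := by
  rw [cross3_curl3, curl3_cross3 hu hB, grad3_dot3 hu hu, div3_smul (hu.dot3 hB) hu,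
    grad3_dot3 hu hB]
  have h₁ := dot3_gradTdot B u u p
  have h₂ := dot3_gradTdot u u B p
  have h₃ := dot3_gradTdot u B u p
  simp only [dot3_eq_dotProduct, dotProduct_add, dotProduct_sub, dotProduct_smul, smul_eq_mul]
    at h₁ h₂ h₃ ⊢
  rw [dotProduct_comm (u p) (B p)]
  linear_combination -h₁ + h₂ + h₃

end Calculus

theorem cross_helicity_balance_general
    (u B : Pt → Vec3) (ρ S T h : Pt → ℝ) (μ₀ : ℝ)
    (hu : SmoothV u) (hB : SmoothV B) (hh : SmoothS h)
    (hfar : ∀ p : Pt,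
      dtVec B p - curl3 (fun q => cross3 (u q) (B q)) p = 0)
    (hgauss : ∀ p : Pt, div3 B p = 0)
    (hmom : ∀ p : Pt,
      dtVec u p - cross3 (u p) (curl3 u p)
        + grad3 (fun q => h q + dot3 (u q) (u q) / 2) p
        - (μ₀ * ρ p)⁻¹ • cross3 (curl3 B p) (B p)
        = T p • grad3 S p) :
    ∀ p : Pt,
      dt (fun q => dot3 (u q) (B q)) p
        + div3 (fun q =>
            dot3 (u q) (B q) • u q
              + (h q - dot3 (u q) (u q) / 2) • B q) p
        = T p * dot3 (B p) (grad3 S p) := by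
  intro p
  have hu' : DifferentiableAt ℝ u p := hu.differentiable (by simp) p
  have hB' : DifferentiableAt ℝ B p := hB.differentiable (by simp) p
  have hh' : DifferentiableAt ℝ h p := hh.differentiable (by simp) p
  have hE : DifferentiableAt ℝ (fun q => dot3 (u q) (u q)) p := hu'.dot3 hu'
  have hE2 : DifferentiableAt ℝ (fun q => dot3 (u q) (u q) / 2) p := by fun_prop
  have hφ : DifferentiableAt ℝ (fun q => h q - dot3 (u q) (u q) / 2) p := hh'.sub hE2
  have hadv : DifferentiableAt ℝ (fun q => dot3 (u q) (B q) • u q) p := (hu'.dot3 hB').smul hu'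
  have hφB : DifferentiableAt ℝ (fun q => (h q - dot3 (u q) (u q) / 2) • B q) p := hφ.smul hB'
  have hdtu : dtVec u p = cross3 (u p) (curl3 u p)
      - grad3 (fun q => h q + dot3 (u q) (u q) / 2) p
      + (μ₀ * ρ p)⁻¹ • cross3 (curl3 B p) (B p) + T p • grad3 S p := by
    rw [← hmom p]; abel
  have hdtB : dtVec B p = curl3 (fun q => cross3 (u q) (B q)) p := sub_eq_zero.mp (hfar p)
  rw [dt_dot3 hu' hB', dot3_comm (dtVec u p), div3_add hadv hφB, div3_smul hφ hB', hgauss p,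
    hdtu, hdtB, grad3_add hh' hE2, grad3_sub hh' hE2, grad3_div_const hE]
  have hkin := dot3_cross3_curl3_add_dot3_curl3_cross3 hu' hB'
  have hLorentz := dot3_cross3_self_right (curl3 B p) (B p)
  rw [hgauss p] at hkin
  simp only [dot3_eq_dotProduct, dotProduct_add, dotProduct_sub, dotProduct_smul, smul_eq_mul]
    at hkin hLorentz ⊢
  linear_combination hkin + (μ₀ * ρ p)⁻¹ * hLorentz

/-- the MHD cross helicity density u·B satisfies the balance
    law with source T B·∇S. -/
theorem cross_helicity_balance
    (u B : Pt → Vec3) (ρ S T h : Pt → ℝ) (μ₀ : ℝ)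
    (hu : SmoothV u) (hB : SmoothV B) (hρ : SmoothS ρ)
    (hS : SmoothS S) (hT : SmoothS T) (hh : SmoothS h)
    (hρpos : ∀ p : Pt, 0 < ρ p) (hμ₀ : 0 < μ₀)
    (hfar : ∀ p : Pt,
      dtVec B p - curl3 (fun q => cross3 (u q) (B q)) p = 0)
    (hgauss : ∀ p : Pt, div3 B p = 0)
    (hmom : ∀ p : Pt,
      dtVec u p - cross3 (u p) (curl3 u p)
        + grad3 (fun q => h q + dot3 (u q) (u q) / 2) p
        - (μ₀ * ρ p)⁻¹ • cross3 (curl3 B p) (B p)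
        = T p • grad3 S p) :
    ∀ p : Pt,
      dt (fun q => dot3 (u q) (B q)) p
        + div3 (fun q =>
            dot3 (u q) (B q) • u q
              + (h q - dot3 (u q) (u q) / 2) • B q) p
        = T p * dot3 (B p) (grad3 S p) :=
  cross_helicity_balance_general u B ρ S T h μ₀ hu hB hh hfar hgauss hmom
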